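/- With all signs εᵢ = 1 and n ≥ 2, for any two distinct pure basis elements b, c of the real Cayley–Dickson algebra 𝔸ₙ, the 4-dimensional ℝ-subspace spanned by {1, b, c, b·c} is closed under multiplication, and there is an ℝ-linear bijection from this subspace onto the quaternions ℍ that sends 1 to 1 and preserves multiplication; in particular the subalgebra generated by b and c is associative. -/

import Mathlib

noncomputable section

/-- The real Cayley–Dickson algebra carrier: `CD 0 = ℝ`, `CD (n+1) = CD n × CD n`. -/
def CD : ℕ → Type
  | 0 => ℝ
  | n + 1 => CD n × CD n

instance CD.instAddCommGroup : (n : ℕ) → AddCommGroup (CD n)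
  | 0 => inferInstanceAs (AddCommGroup ℝ)
  | n + 1 =>
    letI := CD.instAddCommGroup n
    inferInstanceAs (AddCommGroup (CD n × CD n))

instance CD.instModule : (n : ℕ) → Module ℝ (CD n)
  | 0 => inferInstanceAs (Module ℝ ℝ)
  | n + 1 =>
    letI := CD.instModule n
    inferInstanceAs (Module ℝ (CD n × CD n))

/-- The unit of the Cayley–Dickson algebra. -/
def CD.one : (n : ℕ) → CD n
  | 0 => (1 : ℝ)
  | n + 1 => (CD.one n, 0)

/-- Conjugation: `(a, b)* = (a*, -b)`, identity on `ℝ`. -/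
def CD.conj : (n : ℕ) → CD n → CD n
  | 0, a => a
  | n + 1, x => (CD.conj n x.1, -x.2)

/-- Cayley–Dickson multiplication with sign vector `ε`:
`(a,b)·(c,d) = (a·c − ε (n+1) • (d*·b), d·a + b·c*)`. -/
def CD.mul (ε : ℕ → ℝ) : (n : ℕ) → CD n → CD n → CD n
  | 0, a, c => (show ℝ from a) * (show ℝ from c)
  | n + 1, x, y =>
    (CD.mul ε n x.1 y.1 - ε (n + 1) • CD.mul ε n (CD.conj n y.2) x.2,
     CD.mul ε n y.2 x.1 + CD.mul ε n x.2 (CD.conj n y.1))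

/-- The standard basis element `e α` of `CD n`, for `α ⊆ {1,…,n}`. -/
def CD.basis : (n : ℕ) → Finset ℕ → CD n
  | 0, _ => (1 : ℝ)
  | n + 1, α =>
    if n + 1 ∈ α then ((0 : CD n), CD.basis n (α.erase (n + 1)))
    else (CD.basis n α, (0 : CD n))

/-- `α` indexes a pure basis element of `CD n`. -/
def CD.IsPure (n : ℕ) (α : Finset ℕ) : Prop :=
  α.Nonempty ∧ α ⊆ Finset.Icc 1 n

/-- The associator `[x,y,z] = (x·y)·z − x·(y·z)`. -/
def CD.assoc (ε : ℕ → ℝ) (n : ℕ) (x y z : CD n) : CD n :=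
  CD.mul ε n (CD.mul ε n x y) z - CD.mul ε n x (CD.mul ε n y z)

/-- A triad: indices of three pairwise distinct pure basis elements `b, c, d`
with `d ≠ ±(b·c)` (all signs `εᵢ = 1`). -/
def CD.IsTriad (n : ℕ) (α β γ : Finset ℕ) : Prop :=
  CD.IsPure n α ∧ CD.IsPure n β ∧ CD.IsPure n γ ∧
  α ≠ β ∧ α ≠ γ ∧ β ≠ γ ∧
  CD.basis n γ ≠ CD.mul (fun _ => 1) n (CD.basis n α) (CD.basis n β) ∧
  CD.basis n γ ≠ -CD.mul (fun _ => 1) n (CD.basis n α) (CD.basis n β)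

/-- Multiplication with all signs `εᵢ = 1`. -/
abbrev CD.mul1 (n : ℕ) : CD n → CD n → CD n := CD.mul (fun _ => 1) n

/-- Associator with all signs `εᵢ = 1`. -/
abbrev CD.assoc1 (n : ℕ) : CD n → CD n → CD n → CD n := CD.assoc (fun _ => 1) n

/-!
With all signs `+1`, basis elements multiply like signed symmetric differences,
`e_α e_β = ± e_{α ∆ β}`, and each is cancelled on either side by its conjugate, which for a pure
one is its negative. So for distinct pure `b = e_α`, `c = e_β` and `u = b c = ± e_{α ∆ β}`:
`b² = c² = u² = -1`, distinct pure basis elements anticommute, `b (b c) = -c` and `(b c) c = -b`.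
Thus `1, b, c, u` obey the multiplication table of `1, i, j, k`, and
`q ↦ q₀ + q₁ b + q₂ c + q₃ u` is a multiplicative linear map `ℍ → 𝔸ₙ`. It is injective since
`q̄ q = |q|²` is real and `1 ≠ 0` in `𝔸ₙ`, and its image is the span of `1, b, c, u`, which is
therefore a copy of `ℍ`.
-/

section QuaternionTable

open Quaternion

variable {V : Type*} [AddCommGroup V] [Module ℝ V] (μ : V →ₗ[ℝ] V →ₗ[ℝ] V)

structure IsQuaternionTable (e b c : V) : Prop where
  one_mul : ∀ x, μ e x = x
  mul_one : ∀ x, μ x e = x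
  i_mul_i : μ b b = -e
  j_mul_j : μ c c = -e
  k_mul_k : μ (μ b c) (μ b c) = -e
  j_mul_i : μ c b = -μ b c
  i_mul_k : μ b (μ b c) = -c
  k_mul_i : μ (μ b c) b = c
  j_mul_k : μ c (μ b c) = b
  k_mul_j : μ (μ b c) c = -b

def quaternionMap (e b c : V) : Quaternion ℝ →ₗ[ℝ] V where
  toFun q := q.re • e + q.imI • b + q.imJ • c + q.imK • μ b c
  map_add' p q := by simp only [Quaternion.re_add, Quaternion.imI_add, Quaternion.imJ_add,
    Quaternion.imK_add, add_smul]; abel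
  map_smul' r q := by simp [smul_add, mul_smul]

variable {μ} {e b c : V}

@[simp] theorem quaternionMap_apply (q : Quaternion ℝ) :
    quaternionMap μ e b c q = q.re • e + q.imI • b + q.imJ • c + q.imK • μ b c := rfl

theorem quaternionMap_mk (r x y z : ℝ) :
    quaternionMap μ e b c ⟨r, x, y, z⟩ = r • e + x • b + y • c + z • μ b c := rfl

theorem range_quaternionMap :
    LinearMap.range (quaternionMap μ e b c) = Submodule.span ℝ {e, b, c, μ b c} := by
  apply le_antisymm
  · rintro _ ⟨q, rfl⟩
    simp only [quaternionMap_apply]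
    refine add_mem (add_mem (add_mem ?_ ?_) ?_) ?_ <;>
      exact Submodule.smul_mem _ _ (Submodule.subset_span (by simp))
  · rw [Submodule.span_le]
    rintro _ (rfl | rfl | rfl | rfl)
    · exact ⟨⟨1, 0, 0, 0⟩, by simp [quaternionMap_mk]⟩
    · exact ⟨⟨0, 1, 0, 0⟩, by simp [quaternionMap_mk]⟩
    · exact ⟨⟨0, 0, 1, 0⟩, by simp [quaternionMap_mk]⟩
    · exact ⟨⟨0, 0, 0, 1⟩, by simp [quaternionMap_mk]⟩

namespace IsQuaternionTable

theorem quaternionMap_mul (h : IsQuaternionTable μ e b c) (p q : Quaternion ℝ) :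
    quaternionMap μ e b c (p * q) = μ (quaternionMap μ e b c p) (quaternionMap μ e b c q) := by
  simp only [quaternionMap_apply, map_add, map_smul, LinearMap.add_apply, LinearMap.smul_apply,
    h.one_mul, h.mul_one, h.i_mul_i, h.j_mul_j, h.k_mul_k, h.j_mul_i, h.i_mul_k, h.k_mul_i,
    h.j_mul_k, h.k_mul_j, Quaternion.re_mul, Quaternion.imI_mul, Quaternion.imJ_mul,
    Quaternion.imK_mul]
  match_scalars <;> ring

theorem quaternionMap_injective (h : IsQuaternionTable μ e b c) (he : e ≠ 0) :
    Function.Injective (quaternionMap μ e b c) := by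
  refine (injective_iff_map_eq_zero _).2 fun q hq => ?_
  have h0 : quaternionMap μ e b c (star q * q) = 0 := by
    rw [h.quaternionMap_mul, hq, map_zero]
  rw [star_mul_self] at h0
  have : normSq q • e = 0 := by simpa using h0
  exact normSq_eq_zero.1 ((smul_eq_zero.1 this).resolve_right he)

theorem mul_mem_span (h : IsQuaternionTable μ e b c) {x y : V}
    (hx : x ∈ Submodule.span ℝ {e, b, c, μ b c}) (hy : y ∈ Submodule.span ℝ {e, b, c, μ b c}) :
    μ x y ∈ Submodule.span ℝ {e, b, c, μ b c} := by
  rw [← range_quaternionMap] at hx hy ⊢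
  obtain ⟨p, rfl⟩ := hx
  obtain ⟨q, rfl⟩ := hy
  exact ⟨p * q, h.quaternionMap_mul p q⟩

theorem mul_assoc_of_mem_span (h : IsQuaternionTable μ e b c) {x y z : V}
    (hx : x ∈ Submodule.span ℝ {e, b, c, μ b c}) (hy : y ∈ Submodule.span ℝ {e, b, c, μ b c})
    (hz : z ∈ Submodule.span ℝ {e, b, c, μ b c}) :
    μ (μ x y) z = μ x (μ y z) := by
  rw [← range_quaternionMap] at hx hy hz
  obtain ⟨p, rfl⟩ := hx
  obtain ⟨q, rfl⟩ := hy
  obtain ⟨r, rfl⟩ := hz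
  simp only [← h.quaternionMap_mul, mul_assoc]

def quaternionEquiv (h : IsQuaternionTable μ e b c) (he : e ≠ 0) :
    Quaternion ℝ ≃ₗ[ℝ] Submodule.span ℝ {e, b, c, μ b c} :=
  (LinearEquiv.ofInjective _ (h.quaternionMap_injective he)).trans
    (LinearEquiv.ofEq _ _ range_quaternionMap)

@[simp] theorem coe_quaternionEquiv (h : IsQuaternionTable μ e b c) (he : e ≠ 0)
    (q : Quaternion ℝ) :
    (h.quaternionEquiv he q : V) = quaternionMap μ e b c q := rfl

theorem quaternionEquiv_symm_one (h : IsQuaternionTable μ e b c) (he : e ≠ 0) :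
    (h.quaternionEquiv he).symm ⟨e, Submodule.subset_span (Set.mem_insert _ _)⟩ = 1 :=
  (LinearEquiv.symm_apply_eq _).2 (Subtype.ext (by simp))

theorem quaternionEquiv_symm_mul (h : IsQuaternionTable μ e b c) (he : e ≠ 0)
    {x y z : Submodule.span ℝ {e, b, c, μ b c}} (hxyz : μ x y = z) :
    (h.quaternionEquiv he).symm z =
      (h.quaternionEquiv he).symm x * (h.quaternionEquiv he).symm y := by
  rw [LinearEquiv.symm_apply_eq]
  ext
  simp only [coe_quaternionEquiv, h.quaternionMap_mul, ← coe_quaternionEquiv h he,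
    LinearEquiv.apply_symm_apply, hxyz]

end IsQuaternionTable

end QuaternionTable

namespace CD

section Algebra

variable {n : ℕ}

theorem ext {x y : CD (n + 1)} (h₁ : x.1 = y.1) (h₂ : x.2 = y.2) : x = y := Prod.ext h₁ h₂

@[simp] theorem fst_add (x y : CD (n + 1)) : (x + y).1 = x.1 + y.1 := rfl
@[simp] theorem snd_add (x y : CD (n + 1)) : (x + y).2 = x.2 + y.2 := rfl
@[simp] theorem fst_neg (x : CD (n + 1)) : (-x).1 = -x.1 := rfl
@[simp] theorem snd_neg (x : CD (n + 1)) : (-x).2 = -x.2 := rfl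
@[simp] theorem fst_smul (r : ℝ) (x : CD (n + 1)) : (r • x).1 = r • x.1 := rfl
@[simp] theorem snd_smul (r : ℝ) (x : CD (n + 1)) : (r • x).2 = r • x.2 := rfl
@[simp] theorem fst_zero : (0 : CD (n + 1)).1 = 0 := rfl

def mk (a b : CD n) : CD (n + 1) := (a, b)

@[simp] theorem fst_mk (a b : CD n) : (mk a b).1 = a := rfl
@[simp] theorem snd_mk (a b : CD n) : (mk a b).2 = b := rfl

@[simp] theorem fst_conj (x : CD (n + 1)) : (conj (n + 1) x).1 = conj n x.1 := rfl
@[simp] theorem snd_conj (x : CD (n + 1)) : (conj (n + 1) x).2 = -x.2 := rfl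
@[simp] theorem fst_one : (one (n + 1)).1 = one n := rfl
@[simp] theorem snd_one : (one (n + 1)).2 = 0 := rfl

theorem conj_add : ∀ {n} (x y : CD n), conj n (x + y) = conj n x + conj n y
  | 0, _, _ => rfl
  | _ + 1, _, _ => ext (conj_add _ _) (neg_add _ _)

theorem conj_smul : ∀ {n} (r : ℝ) (x : CD n), conj n (r • x) = r • conj n x
  | 0, _, _ => rfl
  | _ + 1, _, _ => ext (conj_smul _ _) (smul_neg _ _).symm

def conjₗ (n : ℕ) : CD n →ₗ[ℝ] CD n where
  toFun := conj n
  map_add' := conj_add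
  map_smul' := conj_smul

@[simp] theorem conj_zero : conj n 0 = 0 := map_zero (conjₗ n)
@[simp] theorem conj_neg (x : CD n) : conj n (-x) = -conj n x := map_neg (conjₗ n) x
@[simp] theorem conj_sub (x y : CD n) : conj n (x - y) = conj n x - conj n y :=
  map_sub (conjₗ n) x y

@[simp] theorem conj_conj : ∀ {n} (x : CD n), conj n (conj n x) = x
  | 0, _ => rfl
  | _ + 1, _ => ext (conj_conj _) (neg_neg _)

@[simp] theorem conj_one : ∀ {n}, conj n (one n) = one n
  | 0 => rfl
  | _ + 1 => ext conj_one neg_zero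

theorem one_ne_zero : ∀ {n}, one n ≠ 0
  | 0 => _root_.one_ne_zero (α := ℝ)
  | _ + 1 => fun h => one_ne_zero (by simpa using congrArg Prod.fst h)

variable (ε : ℕ → ℝ)

@[simp] theorem fst_mul (x y : CD (n + 1)) :
    (mul ε (n + 1) x y).1 = mul ε n x.1 y.1 - ε (n + 1) • mul ε n (conj n y.2) x.2 := rfl
@[simp] theorem snd_mul (x y : CD (n + 1)) :
    (mul ε (n + 1) x y).2 = mul ε n y.2 x.1 + mul ε n x.2 (conj n y.1) := rfl

theorem add_mul_and_mul_add (n : ℕ) : ∀ x y z : CD n,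
    mul ε n (x + y) z = mul ε n x z + mul ε n y z ∧
      mul ε n z (x + y) = mul ε n z x + mul ε n z y := by
  induction n with
  | zero => exact fun x y z => ⟨add_mul (R := ℝ) x y z, mul_add (R := ℝ) z x y⟩
  | succ n ih =>
    intro x y z
    constructor <;> refine ext ?_ ?_ <;>
      simp only [fst_mul, snd_mul, fst_add, snd_add, conj_add, (ih _ _ _).1, (ih _ _ _).2,
        smul_add] <;> abel

theorem smul_mul_and_mul_smul (n : ℕ) : ∀ (r : ℝ) (x z : CD n),
    mul ε n (r • x) z = r • mul ε n x z ∧ mul ε n z (r • x) = r • mul ε n z x := by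
  induction n with
  | zero => exact fun r x z => ⟨mul_assoc (G := ℝ) r x z, mul_left_comm (G := ℝ) z r x⟩
  | succ n ih =>
    intro r x z
    constructor <;> refine ext ?_ ?_ <;>
      simp only [fst_mul, snd_mul, fst_smul, snd_smul, conj_smul, (ih _ _ _).1, (ih _ _ _).2,
        smul_add, smul_sub, smul_comm (ε _)]

def mulₗ (n : ℕ) : CD n →ₗ[ℝ] CD n →ₗ[ℝ] CD n :=
  LinearMap.mk₂ ℝ (mul ε n) (fun x y z => (add_mul_and_mul_add ε n x y z).1)
    (fun r x z => (smul_mul_and_mul_smul ε n r x z).1)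
    (fun z x y => (add_mul_and_mul_add ε n x y z).2)
    (fun r x z => (smul_mul_and_mul_smul ε n r z x).2)

@[simp] theorem mulₗ_apply (x y : CD n) : mulₗ ε n x y = mul ε n x y := rfl

@[simp] theorem mul_zero_left (x : CD n) : mul ε n 0 x = 0 := LinearMap.map_zero₂ (mulₗ ε n) x
@[simp] theorem mul_zero_right (x : CD n) : mul ε n x 0 = 0 := map_zero (mulₗ ε n x)

@[simp] theorem mul_smul_left (r : ℝ) (x y : CD n) : mul ε n (r • x) y = r • mul ε n x y :=
  (smul_mul_and_mul_smul ε n r x y).1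
@[simp] theorem mul_smul_right (r : ℝ) (x y : CD n) : mul ε n x (r • y) = r • mul ε n x y :=
  (smul_mul_and_mul_smul ε n r y x).2
@[simp] theorem mul_neg_left (x y : CD n) : mul ε n (-x) y = -mul ε n x y :=
  LinearMap.map_neg₂ (mulₗ ε n) x y
@[simp] theorem mul_neg_right (x y : CD n) : mul ε n x (-y) = -mul ε n x y := map_neg (mulₗ ε n x) y

@[simp] theorem mul_one (n : ℕ) : ∀ x : CD n, mul ε n x (one n) = x := by
  induction n with
  | zero => exact _root_.mul_one (M := ℝ)
  | succ n ih => exact fun x => ext (by simp [ih]) (by simp [ih])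

@[simp] theorem one_mul (n : ℕ) : ∀ x : CD n, mul ε n (one n) x = x := by
  induction n with
  | zero => exact _root_.one_mul (M := ℝ)
  | succ n ih => exact fun x => ext (by simp [ih]) (by simp)

theorem conj_mul (n : ℕ) : ∀ x y : CD n, conj n (mul ε n x y) = mul ε n (conj n y) (conj n x) := by
  induction n with
  | zero => exact mul_comm (G := ℝ)
  | succ n ih => exact fun x y => ext (by simp [ih, conj_smul]) (by simp)

end Algebra

section Basis

open symmDiff

variable {n : ℕ}

theorem basis_succ_of_mem {α : Finset ℕ} (h : n + 1 ∈ α) :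
    basis (n + 1) α = mk 0 (basis n (α.erase (n + 1))) := if_pos h

theorem basis_succ_of_notMem {α : Finset ℕ} (h : n + 1 ∉ α) :
    basis (n + 1) α = mk (basis n α) 0 := if_neg h

theorem basis_zero (α : Finset ℕ) : basis 0 α = one 0 := rfl

theorem conj_basis_eq_smul (n : ℕ) (α : Finset ℕ) :
    ∃ t : ℝ, t * t = 1 ∧ conj n (basis n α) = t • basis n α := by
  induction n generalizing α with
  | zero => exact ⟨1, _root_.mul_one 1, (one_smul ℝ _).symm⟩
  | succ n ih =>
    by_cases h : n + 1 ∈ α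
    · exact ⟨-1, by norm_num, by rw [basis_succ_of_mem h]; exact ext (by simp) (by simp)⟩
    · obtain ⟨t, ht, hconj⟩ := ih α
      exact ⟨t, ht, by rw [basis_succ_of_notMem h]; exact ext (by simp [hconj]) (by simp)⟩

-- The four identities are proved together: each case of the induction step needs the others.
theorem basis_mul_cancel (n : ℕ) (α : Finset ℕ) (y : CD n) :
    mul1 n (conj n (basis n α)) (mul1 n (basis n α) y) = y ∧
      mul1 n (basis n α) (mul1 n (conj n (basis n α)) y) = y ∧
      mul1 n (mul1 n y (basis n α)) (conj n (basis n α)) = y ∧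
      mul1 n (mul1 n y (conj n (basis n α))) (basis n α) = y := by
  induction n generalizing α with
  | zero => simp [basis_zero]
  | succ n ih =>
    by_cases h : n + 1 ∈ α
    · rw [basis_succ_of_mem h]
      refine ⟨ext ?_ ?_, ext ?_ ?_, ext ?_ ?_, ext ?_ ?_⟩ <;> simp [conj_mul, ih]
    · rw [basis_succ_of_notMem h]
      refine ⟨ext ?_ ?_, ext ?_ ?_, ext ?_ ?_, ext ?_ ?_⟩ <;> simp [conj_mul, ih]

theorem basis_mul_basis (n : ℕ) (α β : Finset ℕ) :
    ∃ s : ℝ, s * s = 1 ∧ mul1 n (basis n α) (basis n β) = s • basis n (α ∆ β) := by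
  induction n generalizing α β with
  | zero => exact ⟨1, _root_.one_mul 1, by simp [basis_zero]⟩
  | succ n ih =>
    by_cases hα : n + 1 ∈ α <;> by_cases hβ : n + 1 ∈ β
    · obtain ⟨t, ht, hconj⟩ := conj_basis_eq_smul n (β.erase (n + 1))
      obtain ⟨s, hs, hmul⟩ := ih (β.erase (n + 1)) (α.erase (n + 1))
      have hγ : n + 1 ∉ α ∆ β := by simp [Finset.mem_symmDiff, hα, hβ]
      have hset : β.erase (n + 1) ∆ α.erase (n + 1) = α ∆ β := by
        ext a; simp only [Finset.mem_symmDiff, Finset.mem_erase]; grind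
      refine ⟨-(t * s), by rw [neg_mul_neg, mul_mul_mul_comm, ht, hs, _root_.one_mul], ?_⟩
      rw [basis_succ_of_mem hα, basis_succ_of_mem hβ, basis_succ_of_notMem hγ]
      exact ext (by simp [hconj, hmul, hset, smul_smul]) (by simp)
    · obtain ⟨t, ht, hconj⟩ := conj_basis_eq_smul n β
      obtain ⟨s, hs, hmul⟩ := ih (α.erase (n + 1)) β
      have hγ : n + 1 ∈ α ∆ β := by simp [Finset.mem_symmDiff, hα, hβ]
      have hset : α.erase (n + 1) ∆ β = (α ∆ β).erase (n + 1) := by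
        ext a; simp only [Finset.mem_symmDiff, Finset.mem_erase]; grind
      refine ⟨t * s, by rw [mul_mul_mul_comm, ht, hs, _root_.one_mul], ?_⟩
      rw [basis_succ_of_mem hα, basis_succ_of_notMem hβ, basis_succ_of_mem hγ]
      exact ext (by simp) (by simp [hconj, hmul, hset, smul_smul])
    · obtain ⟨s, hs, hmul⟩ := ih (β.erase (n + 1)) α
      have hγ : n + 1 ∈ α ∆ β := by simp [Finset.mem_symmDiff, hα, hβ]
      have hset : β.erase (n + 1) ∆ α = (α ∆ β).erase (n + 1) := by
        ext a; simp only [Finset.mem_symmDiff, Finset.mem_erase]; grind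
      refine ⟨s, hs, ?_⟩
      rw [basis_succ_of_notMem hα, basis_succ_of_mem hβ, basis_succ_of_mem hγ]
      exact ext (by simp) (by simp [hmul, hset])
    · obtain ⟨s, hs, hmul⟩ := ih α β
      have hγ : n + 1 ∉ α ∆ β := by simp [Finset.mem_symmDiff, hα, hβ]
      refine ⟨s, hs, ?_⟩
      rw [basis_succ_of_notMem hα, basis_succ_of_notMem hβ, basis_succ_of_notMem hγ]
      exact ext (by simp [hmul]) (by simp)

theorem IsPure.symmDiff {α β : Finset ℕ} (hα : IsPure n α) (hβ : IsPure n β) (hne : α ≠ β) :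
    IsPure n (α ∆ β) :=
  ⟨Finset.nonempty_iff_ne_empty.2 (by simpa using hne),
    Finset.symmDiff_subset_union.trans (Finset.union_subset hα.2 hβ.2)⟩

theorem conj_basis_of_isPure {α : Finset ℕ} (hα : IsPure n α) :
    conj n (basis n α) = -basis n α := by
  induction n with
  | zero => exact absurd hα.2 (by simpa [Finset.subset_empty] using hα.1.ne_empty)
  | succ n ih =>
    by_cases h : n + 1 ∈ α
    · rw [basis_succ_of_mem h]
      exact ext (by simp) (by simp)
    · have hα' : IsPure n α := ⟨hα.1, fun a ha => Finset.mem_Icc.2 (by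
        have := Finset.mem_Icc.1 (hα.2 ha)
        have := ne_of_mem_of_not_mem ha h
        omega)⟩
      rw [basis_succ_of_notMem h]
      exact ext (by simp [ih hα']) (by simp)

theorem basis_mul_basis_mul {α : Finset ℕ} (hα : IsPure n α) (y : CD n) :
    mul1 n (basis n α) (mul1 n (basis n α) y) = -y :=
  neg_eq_iff_eq_neg.mp (by simpa [conj_basis_of_isPure hα] using (basis_mul_cancel n α y).1)

theorem mul_basis_mul_basis {α : Finset ℕ} (hα : IsPure n α) (y : CD n) :
    mul1 n (mul1 n y (basis n α)) (basis n α) = -y :=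
  neg_eq_iff_eq_neg.mp (by simpa [conj_basis_of_isPure hα] using (basis_mul_cancel n α y).2.2.1)

theorem basis_mul_self {α : Finset ℕ} (hα : IsPure n α) :
    mul1 n (basis n α) (basis n α) = -one n := by
  simpa using basis_mul_basis_mul hα (one n)

theorem basis_mul_basis_comm {α β : Finset ℕ} (hα : IsPure n α) (hβ : IsPure n β) (hne : α ≠ β) :
    mul1 n (basis n β) (basis n α) = -mul1 n (basis n α) (basis n β) := by
  obtain ⟨s, -, hmul⟩ := basis_mul_basis n α β
  calc mul1 n (basis n β) (basis n α)
      = conj n (mul1 n (basis n α) (basis n β)) := by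
        simp [conj_mul, conj_basis_of_isPure hα, conj_basis_of_isPure hβ]
    _ = -mul1 n (basis n α) (basis n β) := by
        simp [hmul, conj_smul, conj_basis_of_isPure (hα.symmDiff hβ hne)]

theorem isQuaternionTable_basis {α β : Finset ℕ} (hα : IsPure n α) (hβ : IsPure n β)
    (hne : α ≠ β) :
    IsQuaternionTable (mulₗ (fun _ => 1) n) (one n) (basis n α) (basis n β) := by
  obtain ⟨s, hs, hmul⟩ := basis_mul_basis n α β
  have hγ := hα.symmDiff hβ hne
  have hαγ : α ≠ α ∆ β := fun h => hβ.1.ne_empty (by simpa using h.symm)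
  have hβγ : β ≠ α ∆ β := fun h => hα.1.ne_empty (by simpa using h.symm)
  have hki : mul1 n (mul1 n (basis n α) (basis n β)) (basis n α) =
      -mul1 n (basis n α) (mul1 n (basis n α) (basis n β)) := by
    simp [hmul, basis_mul_basis_comm hα hγ hαγ]
  have hjk : mul1 n (basis n β) (mul1 n (basis n α) (basis n β)) =
      -mul1 n (mul1 n (basis n α) (basis n β)) (basis n β) := by
    simp [hmul, basis_mul_basis_comm hγ hβ hβγ.symm]
  refine ⟨one_mul _ n, mul_one _ n, basis_mul_self hα, basis_mul_self hβ, ?_,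
    basis_mul_basis_comm hα hβ hne, basis_mul_basis_mul hα _, ?_, ?_, mul_basis_mul_basis hβ _⟩
  · simp [hmul, basis_mul_self hγ, smul_smul, hs]
  · simp [hki, basis_mul_basis_mul hα]
  · simp [hjk, mul_basis_mul_basis hβ]

end Basis

end CD

theorem stmt8_general (n : ℕ) (α β : Finset ℕ) (hα : CD.IsPure n α)
    (hβ : CD.IsPure n β) (hne : α ≠ β) (b c : CD n) (hb : b = CD.basis n α)
    (hc : c = CD.basis n β) :
    (∀ x ∈ Submodule.span ℝ {CD.one n, b, c, CD.mul1 n b c},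
      ∀ y ∈ Submodule.span ℝ {CD.one n, b, c, CD.mul1 n b c},
        CD.mul1 n x y ∈ Submodule.span ℝ {CD.one n, b, c, CD.mul1 n b c}) ∧
    (∃ f : (Submodule.span ℝ {CD.one n, b, c, CD.mul1 n b c} :
        Submodule ℝ (CD n)) →ₗ[ℝ] Quaternion ℝ,
      Function.Bijective f ∧
      f ⟨CD.one n, Submodule.subset_span (Set.mem_insert _ _)⟩ = 1 ∧
      ∀ x y z : (Submodule.span ℝ {CD.one n, b, c, CD.mul1 n b c} :
          Submodule ℝ (CD n)),
        CD.mul1 n x.1 y.1 = z.1 → f z = f x * f y) ∧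
    (∀ x ∈ Submodule.span ℝ {CD.one n, b, c, CD.mul1 n b c},
      ∀ y ∈ Submodule.span ℝ {CD.one n, b, c, CD.mul1 n b c},
      ∀ z ∈ Submodule.span ℝ {CD.one n, b, c, CD.mul1 n b c},
        CD.mul1 n (CD.mul1 n x y) z = CD.mul1 n x (CD.mul1 n y z)) := by
  subst hb hc
  have h := CD.isQuaternionTable_basis hα hβ hne
  exact ⟨fun x hx y hy => h.mul_mem_span hx hy,
    ⟨(h.quaternionEquiv CD.one_ne_zero).symm.toLinearMap, LinearEquiv.bijective _,
      h.quaternionEquiv_symm_one _, fun x y z => h.quaternionEquiv_symm_mul _⟩,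
    fun x hx y hy z hz => h.mul_assoc_of_mem_span hx hy hz⟩

/-- (Generalised Artin theorem.) For `n ≥ 2` and distinct pure
basis elements `b, c`, the span of `{1, b, c, b·c}` is closed under multiplication,
is ℝ-linearly multiplicatively isomorphic to the quaternions `ℍ`, and is
associative. -/
theorem stmt8 (n : ℕ) (hn : 2 ≤ n) (α β : Finset ℕ) (hα : CD.IsPure n α)
    (hβ : CD.IsPure n β) (hne : α ≠ β) (b c : CD n) (hb : b = CD.basis n α)
    (hc : c = CD.basis n β) :
    (∀ x ∈ Submodule.span ℝ {CD.one n, b, c, CD.mul1 n b c},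
      ∀ y ∈ Submodule.span ℝ {CD.one n, b, c, CD.mul1 n b c},
        CD.mul1 n x y ∈ Submodule.span ℝ {CD.one n, b, c, CD.mul1 n b c}) ∧
    (∃ f : (Submodule.span ℝ {CD.one n, b, c, CD.mul1 n b c} :
        Submodule ℝ (CD n)) →ₗ[ℝ] Quaternion ℝ,
      Function.Bijective f ∧
      f ⟨CD.one n, Submodule.subset_span (Set.mem_insert _ _)⟩ = 1 ∧
      ∀ x y z : (Submodule.span ℝ {CD.one n, b, c, CD.mul1 n b c} :
          Submodule ℝ (CD n)),
        CD.mul1 n x.1 y.1 = z.1 → f z = f x * f y) ∧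
    (∀ x ∈ Submodule.span ℝ {CD.one n, b, c, CD.mul1 n b c},
      ∀ y ∈ Submodule.span ℝ {CD.one n, b, c, CD.mul1 n b c},
      ∀ z ∈ Submodule.span ℝ {CD.one n, b, c, CD.mul1 n b c},
        CD.mul1 n (CD.mul1 n x y) z = CD.mul1 n x (CD.mul1 n y z)) :=
  stmt8_general n α β hα hβ hne b c hb hc
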